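/- arXiv:1507.04167 — 3 statements merged into one kernel-verified Lean document; each statement's English description precedes it below -/
import Mathlib

section
/- Suppose ≽ satisfies A1 (weak order), weak separability (A2), A3, A4, restricted solvability (A8), the Archimedean axiom (A9), and order density, and suppose both coordinates are essential on SE and on NW. Let SE* = ⋃_{z ∈ Θ \ SE_ext} SE(z) and NW* = ⋃_{z ∈ Θ \ NW_ext} NW(z); let D₁ = {a ∈ X₁ : (∃p, ap ∈ SE*) and (∃q, aq ∈ NW*)} and D₂ = {p ∈ X₂ : (∃a, ap ∈ SE*) and (∃b, bp ∈ NW*)}. Suppose (V₁ˢ,V₂ˢ) additively represents ≽ on SE(z) for every z ∈ Θ \ SE_ext, (V₁ⁿ,V₂ⁿ) additively represents ≽ on NW(z) for every z ∈ Θ \ NW_ext, V₁ˢ(a) = V₁ⁿ(a) for every a ∈ D₁ with V₁ˢ nonconstant on D₁, and V₂ˢ(r) = V₂ⁿ(r) = 0 for some r ∈ D₂. Then there exists λ > 0 such that V₂ˢ(p) = λ·V₂ⁿ(p) for every p ∈ D₂. -/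
open Set
open scoped Classical

section ChoquetAxioms

variable {X₁ X₂ : Type*}

/-- Asymmetric (strict) part of a relation. -/
def SP (R : X₁ × X₂ → X₁ × X₂ → Prop) (x y : X₁ × X₂) : Prop := R x y ∧ ¬ R y x

/-- Symmetric (indifference) part of a relation. -/
def IP (R : X₁ × X₂ → X₁ × X₂ → Prop) (x y : X₁ × X₂) : Prop := R x y ∧ R y x

/-- Triple cancellation on a set `A`. -/
def TCancel (R : X₁ × X₂ → X₁ × X₂ → Prop) (A : Set (X₁ × X₂)) : Prop :=
  ∀ a b c d : X₁, ∀ p q r s : X₂,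
    (a,p) ∈ A → (b,q) ∈ A → (a,r) ∈ A → (b,s) ∈ A →
    (c,p) ∈ A → (d,q) ∈ A → (c,r) ∈ A → (d,s) ∈ A →
    R (b,q) (a,p) → R (a,r) (b,s) → R (c,p) (d,q) → R (c,r) (d,s)

/-- A1: weak order (complete and transitive). -/
def A1 (R : X₁ × X₂ → X₁ × X₂ → Prop) : Prop :=
  (∀ x y, R x y ∨ R y x) ∧ (∀ x y z, R x y → R y z → R x z)

/-- A2: weak separability. -/
def A2 (R : X₁ × X₂ → X₁ × X₂ → Prop) : Prop :=
  (∀ a b : X₁, ∀ p : X₂, SP R (a,p) (b,p) → ∀ q : X₂, R (a,q) (b,q)) ∧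
  (∀ p q : X₂, ∀ a : X₁, SP R (a,p) (a,q) → ∀ b : X₁, R (b,p) (b,q))

/-- Induced order on the first coordinate. -/
def Ge1 (R : X₁ × X₂ → X₁ × X₂ → Prop) (a b : X₁) : Prop := ∀ p : X₂, R (a,p) (b,p)

/-- Induced order on the second coordinate. -/
def Ge2 (R : X₁ × X₂ → X₁ × X₂ → Prop) (p q : X₂) : Prop := ∀ a : X₁, R (a,p) (a,q)

def Max1 (R : X₁ × X₂ → X₁ × X₂ → Prop) (a : X₁) : Prop := ∀ b : X₁, Ge1 R a b
def Min1 (R : X₁ × X₂ → X₁ × X₂ → Prop) (a : X₁) : Prop := ∀ b : X₁, Ge1 R b a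
def Max2 (R : X₁ × X₂ → X₁ × X₂ → Prop) (p : X₂) : Prop := ∀ q : X₂, Ge2 R p q
def Min2 (R : X₁ × X₂ → X₁ × X₂ → Prop) (p : X₂) : Prop := ∀ q : X₂, Ge2 R q p

/-- The south-east rectangular cone at `z`. -/
def SEz (R : X₁ × X₂ → X₁ × X₂ → Prop) (z : X₁ × X₂) : Set (X₁ × X₂) :=
  {x | Ge1 R x.1 z.1 ∧ Ge2 R z.2 x.2}

/-- The north-west rectangular cone at `z`. -/
def NWz (R : X₁ × X₂ → X₁ × X₂ → Prop) (z : X₁ × X₂) : Set (X₁ × X₂) :=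
  {x | Ge2 R x.2 z.2 ∧ Ge1 R z.1 x.1}

/-- A3: at every point, triple cancellation holds on `SEz z` or on `NWz z`. -/
def A3 (R : X₁ × X₂ → X₁ × X₂ → Prop) : Prop :=
  ∀ z : X₁ × X₂, TCancel R (SEz R z) ∨ TCancel R (NWz R z)

/-- The region SE. -/
def SEreg (R : X₁ × X₂ → X₁ × X₂ → Prop) : Set (X₁ × X₂) :=
  {x | (∃ z : X₁ × X₂, ¬ Max1 R z.1 ∧ ¬ Min2 R z.2 ∧ TCancel R (SEz R z) ∧ x ∈ SEz R z) ∨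
       ((Max1 R x.1 ∨ Min2 R x.2) ∧ ∀ y ∈ SEz R x, y ≠ x → ¬ TCancel R (NWz R y))}

/-- The region NW. -/
def NWreg (R : X₁ × X₂ → X₁ × X₂ → Prop) : Set (X₁ × X₂) :=
  {x | (∃ z : X₁ × X₂, ¬ Min1 R z.1 ∧ ¬ Max2 R z.2 ∧ TCancel R (NWz R z) ∧ x ∈ NWz R z) ∨
       ((Min1 R x.1 ∨ Max2 R x.2) ∧ ∀ y ∈ NWz R x, y ≠ x → ¬ TCancel R (SEz R y))}

/-- Θ = SE ∩ NW. -/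
def Theta (R : X₁ × X₂ → X₁ × X₂ → Prop) : Set (X₁ × X₂) := SEreg R ∩ NWreg R

/-- Extreme points of SE. -/
def SEext (R : X₁ × X₂ → X₁ × X₂ → Prop) : Set (X₁ × X₂) :=
  {x | x ∈ Theta R ∧ (Min2 R x.2 ∨ Max1 R x.1)}

/-- Extreme points of NW. -/
def NWext (R : X₁ × X₂ → X₁ × X₂ → Prop) : Set (X₁ × X₂) :=
  {x | x ∈ Theta R ∧ (Min1 R x.1 ∨ Max2 R x.2)}

/-- Coordinate 1 is essential on `A`. -/
def Ess1 (R : X₁ × X₂ → X₁ × X₂ → Prop) (A : Set (X₁ × X₂)) : Prop :=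
  ∃ a b : X₁, ∃ p : X₂, (a,p) ∈ A ∧ (b,p) ∈ A ∧ SP R (a,p) (b,p)

/-- Coordinate 2 is essential on `A`. -/
def Ess2 (R : X₁ × X₂ → X₁ × X₂ → Prop) (A : Set (X₁ × X₂)) : Prop :=
  ∃ p q : X₂, ∃ a : X₁, (a,p) ∈ A ∧ (a,q) ∈ A ∧ SP R (a,p) (a,q)

/-- Four points all belonging to a set. -/
def In4 (A : Set (X₁ × X₂)) (w x y z : X₁ × X₂) : Prop :=
  w ∈ A ∧ x ∈ A ∧ y ∈ A ∧ z ∈ A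

/-- A4. -/
def A4 (R : X₁ × X₂ → X₁ × X₂ → Prop) : Prop :=
  ∀ a b c d : X₁, ∀ p q r s : X₂,
    ((In4 (NWreg R) (a,p) (b,q) (a,r) (b,s) ∧ In4 (NWreg R) (c,p) (d,q) (c,r) (d,s)) ∨
     (In4 (SEreg R) (a,p) (b,q) (a,r) (b,s) ∧ In4 (SEreg R) (c,p) (d,q) (c,r) (d,s)) ∨
     (In4 (NWreg R) (a,p) (b,q) (a,r) (b,s) ∧ Ess2 R (NWreg R) ∧
        In4 (SEreg R) (c,p) (d,q) (c,r) (d,s)) ∨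
     (In4 (SEreg R) (a,p) (b,q) (a,r) (b,s) ∧ Ess2 R (SEreg R) ∧
        In4 (NWreg R) (c,p) (d,q) (c,r) (d,s)) ∨
     (In4 (NWreg R) (a,p) (b,q) (c,p) (d,q) ∧ Ess1 R (NWreg R) ∧
        In4 (SEreg R) (a,r) (b,s) (c,r) (d,s)) ∨
     (In4 (SEreg R) (a,p) (b,q) (c,p) (d,q) ∧ Ess1 R (SEreg R) ∧
        In4 (NWreg R) (a,r) (b,s) (c,r) (d,s))) →
    R (b,q) (a,p) → R (a,r) (b,s) → R (c,p) (d,q) → R (c,r) (d,s)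

/-- One half of A5 (stated for the given coordinate order). -/
def A5half (R : X₁ × X₂ → X₁ × X₂ → Prop) : Prop :=
  ∀ a b c d e g x₀ x₁ : X₁, ∀ p q y₀ y₁ πa πb πc πd : X₂,
    ((In4 (NWreg R) (a,p) (b,q) (c,p) (d,q) ∧ Ess1 R (NWreg R)) ∨
     (In4 (SEreg R) (a,p) (b,q) (c,p) (d,q) ∧ Ess1 R (SEreg R))) →
    (In4 (NWreg R) (a,y₀) (b,y₀) (c,y₁) (d,y₁) ∨
     In4 (SEreg R) (a,y₀) (b,y₀) (c,y₁) (d,y₁)) →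
    ((In4 (NWreg R) (x₀,πa) (x₀,πb) (x₁,πc) (x₁,πd) ∧ Ess2 R (NWreg R)) ∨
     (In4 (SEreg R) (x₀,πa) (x₀,πb) (x₁,πc) (x₁,πd) ∧ Ess2 R (SEreg R))) →
    (In4 (NWreg R) (e,πa) (g,πb) (e,πc) (g,πd) ∨
     In4 (SEreg R) (e,πa) (g,πb) (e,πc) (g,πd)) →
    R (b,q) (a,p) → R (c,p) (d,q) →
    IP R (a,y₀) (x₀,πa) → IP R (b,y₀) (x₀,πb) →
    IP R (c,y₁) (x₁,πc) → IP R (d,y₁) (x₁,πd) →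
    R (e,πa) (g,πb) → R (e,πc) (g,πd)

/-- The relation with the roles of the two coordinates exchanged. -/
def swapRel (R : X₁ × X₂ → X₁ × X₂ → Prop) : X₂ × X₁ → X₂ × X₁ → Prop :=
  fun x y => R (x.2, x.1) (y.2, y.1)

/-- A5 : the condition together with its symmetric (coordinate-exchanged) version. -/
def A5 (R : X₁ × X₂ → X₁ × X₂ → Prop) : Prop :=
  A5half R ∧ A5half (swapRel R)

/-- A6 : bi-independence. -/
def A6 (R : X₁ × X₂ → X₁ × X₂ → Prop) : Prop :=
  (∀ a b c d : X₁, ∀ p : X₂,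
    (In4 (SEreg R) (a,p) (b,p) (c,p) (d,p) ∨ In4 (NWreg R) (a,p) (b,p) (c,p) (d,p)) →
    SP R (a,p) (b,p) → (∃ q : X₂, SP R (c,q) (d,q)) → SP R (c,p) (d,p)) ∧
  (∀ p q r s : X₂, ∀ a : X₁,
    (In4 (SEreg R) (a,p) (a,q) (a,r) (a,s) ∨ In4 (NWreg R) (a,p) (a,q) (a,r) (a,s)) →
    SP R (a,p) (a,q) → (∃ b : X₁, SP R (b,r) (b,s)) → SP R (a,r) (a,s))

/-- A7 : both coordinates are essential on X. -/
def A7 (R : X₁ × X₂ → X₁ × X₂ → Prop) : Prop :=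
  Ess1 R Set.univ ∧ Ess2 R Set.univ

/-- A8 : restricted solvability. -/
def A8 (R : X₁ × X₂ → X₁ × X₂ → Prop) : Prop :=
  (∀ a : X₁, ∀ p r : X₂, ∀ y : X₁ × X₂,
    R (a,p) y → R y (a,r) → ∃ b : X₂, IP R (a,b) y) ∧
  (∀ p : X₂, ∀ a c : X₁, ∀ y : X₁ × X₂,
    R (a,p) y → R y (c,p) → ∃ b : X₁, IP R (b,p) y)

/-- `S` is an interval of integers. -/
def IsIntervalZ (S : Set ℤ) : Prop :=
  ∀ i j k : ℤ, i ≤ j → j ≤ k → i ∈ S → k ∈ S → j ∈ S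

/-- Standard sequence on X₁. -/
def StdSeq1 (R : X₁ × X₂ → X₁ × X₂ → Prop) (S : Set ℤ) (g : ℤ → X₁) (y₀ y₁ : X₂) : Prop :=
  IsIntervalZ S ∧ ¬ (Ge2 R y₀ y₁ ∧ Ge2 R y₁ y₀) ∧
  ∀ i, i ∈ S → (i+1) ∈ S → IP R (g i, y₀) (g (i+1), y₁)

def BoundedSeq1 (R : X₁ × X₂ → X₁ × X₂ → Prop) (S : Set ℤ) (g : ℤ → X₁) (y₀ : X₂) : Prop :=
  ∃ u v : X₁ × X₂, ∀ i ∈ S, R u (g i, y₀) ∧ R (g i, y₀) v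

/-- Standard sequence on X₂. -/
def StdSeq2 (R : X₁ × X₂ → X₁ × X₂ → Prop) (S : Set ℤ) (h : ℤ → X₂) (x₀ x₁ : X₁) : Prop :=
  IsIntervalZ S ∧ ¬ (Ge1 R x₀ x₁ ∧ Ge1 R x₁ x₀) ∧
  ∀ i, i ∈ S → (i+1) ∈ S → IP R (x₀, h i) (x₁, h (i+1))

def BoundedSeq2 (R : X₁ × X₂ → X₁ × X₂ → Prop) (S : Set ℤ) (h : ℤ → X₂) (x₀ : X₁) : Prop :=
  ∃ u v : X₁ × X₂, ∀ i ∈ S, R u (x₀, h i) ∧ R (x₀, h i) v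

/-- A9 : Archimedean axiom. -/
def A9 (R : X₁ × X₂ → X₁ × X₂ → Prop) : Prop :=
  (∀ z ∈ NWreg R, ∀ (S : Set ℤ) (g : ℤ → X₁) (y₀ y₁ : X₂),
    StdSeq1 R S g y₀ y₁ → BoundedSeq1 R S g y₀ →
    (∀ i ∈ S, (g i, y₀) ∈ NWz R z ∧ (g i, y₁) ∈ NWz R z) → S.Finite) ∧
  (∀ z ∈ SEreg R, ∀ (S : Set ℤ) (g : ℤ → X₁) (y₀ y₁ : X₂),
    StdSeq1 R S g y₀ y₁ → BoundedSeq1 R S g y₀ →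
    (∀ i ∈ S, (g i, y₀) ∈ SEz R z ∧ (g i, y₁) ∈ SEz R z) → S.Finite) ∧
  (∀ z ∈ NWreg R, ∀ (S : Set ℤ) (h : ℤ → X₂) (x₀ x₁ : X₁),
    StdSeq2 R S h x₀ x₁ → BoundedSeq2 R S h x₀ →
    (∀ i ∈ S, (x₀, h i) ∈ NWz R z ∧ (x₁, h i) ∈ NWz R z) → S.Finite) ∧
  (∀ z ∈ SEreg R, ∀ (S : Set ℤ) (h : ℤ → X₂) (x₀ x₁ : X₁),
    StdSeq2 R S h x₀ x₁ → BoundedSeq2 R S h x₀ →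
    (∀ i ∈ S, (x₀, h i) ∈ SEz R z ∧ (x₁, h i) ∈ SEz R z) → S.Finite)

/-- Structural assumption. -/
def Structural (R : X₁ × X₂ → X₁ × X₂ → Prop) : Prop :=
  (∀ a b : X₁, a ≠ b → ¬ ∀ p : X₂, IP R (a,p) (b,p)) ∧
  (∀ p q : X₂, p ≠ q → ¬ ∀ a : X₁, IP R (a,p) (a,q))

/-- Order density. -/
def OrderDense (R : X₁ × X₂ → X₁ × X₂ → Prop) : Prop :=
  ∀ x y : X₁ × X₂, SP R x y → ∃ z : X₁ × X₂, SP R x z ∧ SP R z y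

/-- Closedness of SE and NW. -/
def Closedness (R : X₁ × X₂ → X₁ × X₂ → Prop) : Prop :=
  (∀ a b : X₁, ∀ p : X₂, (a,p) ∉ NWreg R → (b,p) ∉ SEreg R →
    ∃ c : X₁, (c,p) ∈ Theta R) ∧
  (∀ a : X₁, ∀ p q : X₂, (a,p) ∉ NWreg R → (a,q) ∉ SEreg R →
    ∃ r : X₂, (a,r) ∈ Theta R)

/-- A capacity on the two-element set (coordinate 1 ↦ `0`, coordinate 2 ↦ `1`). -/
structure Capacity where
  ν : Set (Fin 2) → ℝ
  empty' : ν ∅ = 0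
  mono' : ∀ A B : Set (Fin 2), A ⊆ B → ν A ≤ ν B
  norm' : ν Set.univ = 1

/-- Two-point Choquet integral. -/
noncomputable def Choq (c : Capacity) (t₁ t₂ : ℝ) : ℝ :=
  if t₂ ≤ t₁ then c.ν {0} * t₁ + (1 - c.ν {0}) * t₂
  else (1 - c.ν {1}) * t₁ + c.ν {1} * t₂

/-- `ν` together with `(f₁, f₂)` represents `R`. -/
def Represents (c : Capacity) (f₁ : X₁ → ℝ) (f₂ : X₂ → ℝ)
    (R : X₁ × X₂ → X₁ × X₂ → Prop) : Prop :=
  ∀ x y : X₁ × X₂, R x y ↔ Choq c (f₁ y.1) (f₂ y.2) ≤ Choq c (f₁ x.1) (f₂ x.2)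

/-- `(V₁, V₂)` additively represents `R` on `A`. -/
def AddRep (R : X₁ × X₂ → X₁ × X₂ → Prop) (V₁ : X₁ → ℝ) (V₂ : X₂ → ℝ)
    (A : Set (X₁ × X₂)) : Prop :=
  ∀ x ∈ A, ∀ y ∈ A, (R x y ↔ V₁ y.1 + V₂ y.2 ≤ V₁ x.1 + V₂ x.2)

/-- `Φ` represents `R` on `A`. -/
def RepOn (R : X₁ × X₂ → X₁ × X₂ → Prop) (Φ : X₁ × X₂ → ℝ) (A : Set (X₁ × X₂)) : Prop :=
  ∀ x ∈ A, ∀ y ∈ A, (R x y ↔ Φ y ≤ Φ x)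


/-- `S` union of non-extreme SE cones. -/
def SEstar (R : X₁ × X₂ → X₁ × X₂ → Prop) : Set (X₁ × X₂) :=
  ⋃ z ∈ Theta R \ SEext R, SEz R z

/-- Union of non-extreme NW cones. -/
def NWstar (R : X₁ × X₂ → X₁ × X₂ → Prop) : Set (X₁ × X₂) :=
  ⋃ z ∈ Theta R \ NWext R, NWz R z

/-- First coordinates appearing both in `SEstar` and `NWstar`. -/
def D1 (R : X₁ × X₂ → X₁ × X₂ → Prop) : Set X₁ :=
  {a | (∃ p : X₂, (a,p) ∈ SEstar R) ∧ (∃ q : X₂, (a,q) ∈ NWstar R)}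

/-- Second coordinates appearing both in `SEstar` and `NWstar`. -/
def D2 (R : X₁ × X₂ → X₁ × X₂ → Prop) : Set X₂ :=
  {p | (∃ a : X₁, (a,p) ∈ SEstar R) ∧ (∃ b : X₁, (b,p) ∈ NWstar R)}

end ChoquetAxioms

/-!
Fix apexes `z ∈ Θ \ SE_ext` and `ζ ∈ Θ \ NW_ext` and consider the rows `x` crossing both cones.
The mixed SE/NW case of A4 makes `V₂s` and `V₂n` order these rows alike; more precisely, if
`(z.1, x₀) ∼ (ee, y₀)` and `(ζ.1, y₀) ∼ (dd, x₀)`, it turns every comparison of a `V₂s`-increment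
with `σ = V₂s x₀ - V₂s y₀` into the same comparison of the `V₂n`-increment with
`τ = V₂n x₀ - V₂n y₀`. Walking in steps of `σ` (restricted solvability) gives
`|σ (V₂n x - V₂n y) - τ (V₂s x - V₂s y)| ≤ σ τ` on the strip. Order density and the Archimedean
axiom supply such matched steps with `τ` arbitrarily small, so with `V₂s r = V₂n r = 0` the
cross products `V₂s p V₂n q` and `V₂s q V₂n p` coincide. Finitely many points of `D₂` always lie
in a common strip.
-/

open Filter Topology

section RealLemmas

theorem exists_succ_sub_lt_of_monotone {f g : ℕ → ℝ} (hf : Monotone f) (hg : Monotone g)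
    (hbf : BddAbove (range f)) (hbg : BddAbove (range g)) {ε : ℝ} (hε : 0 < ε) :
    ∃ n, f (n + 1) - f n < ε ∧ g (n + 1) - g n < ε := by
  have step_tendsto : ∀ {h : ℕ → ℝ}, Monotone h → BddAbove (range h) →
      Tendsto (fun n => h (n + 1) - h n) atTop (𝓝 0) := fun hh hbdd => by
    have hlim := tendsto_atTop_ciSup hh hbdd
    simpa using (hlim.comp (tendsto_add_atTop_nat 1)).sub hlim
  exact (((step_tendsto hf hbf).eventually (gt_mem_nhds hε)).and
    ((step_tendsto hg hbg).eventually (gt_mem_nhds hε))).exists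

theorem exists_pair_sub_lt {α : Type*} {I : Set α} {u w : α → ℝ}
    (hw : ∀ x ∈ I, ∀ y ∈ I, u x < u y → w x < w y)
    (hbetween : ∀ x ∈ I, ∀ y ∈ I, u x < u y → ∃ m ∈ I, u x < u m ∧ u m < u y)
    {a b : α} (ha : a ∈ I) (hb : b ∈ I) (hab : u a < u b) {ε : ℝ} (hε : 0 < ε) :
    ∃ x ∈ I, ∃ y ∈ I, 0 < u x - u y ∧ u x - u y < ε ∧ 0 < w x - w y ∧ w x - w y < ε := by
  -- an increasing sequence below `b` converges, so its steps become small
  let T := {x // x ∈ I ∧ u x < u b}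
  have hnext : ∀ x : T, ∃ y : T, u x.1 < u y.1 := fun ⟨x, hx, hxb⟩ => by
    obtain ⟨m, hm, hxm, hmb⟩ := hbetween x hx b hb hxb
    exact ⟨⟨m, hm, hmb⟩, hxm⟩
  choose next hnext using hnext
  let f : ℕ → T := fun n => next^[n] ⟨a, ha, hab⟩
  have hf : ∀ n, f (n + 1) = next (f n) := fun n => Function.iterate_succ_apply' next n _
  have hu : StrictMono fun n => u (f n).1 := strictMono_nat_of_lt_succ fun n => by
    simpa only [hf] using hnext (f n)
  have hw' : StrictMono fun n => w (f n).1 := strictMono_nat_of_lt_succ fun n =>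
    hw _ (f n).2.1 _ (f (n + 1)).2.1 (hu (Nat.lt_succ_self n))
  obtain ⟨n, hun, hwn⟩ := exists_succ_sub_lt_of_monotone hu.monotone hw'.monotone
    ⟨u b, by rintro _ ⟨n, rfl⟩; exact (f n).2.2.le⟩
    ⟨w b, by rintro _ ⟨n, rfl⟩; exact (hw _ (f n).2.1 _ hb (f n).2.2).le⟩ hε
  exact ⟨_, (f (n + 1)).2.1, _, (f n).2.1, sub_pos.2 (hu (Nat.lt_succ_self n)), hun,
    sub_pos.2 (hw' (Nat.lt_succ_self n)), hwn⟩

/-- Walk from `y` to `x` in steps along which `u` grows by `σ` and `w` by `τ`; only the last,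
partial step contributes to the error. -/
theorem abs_sub_mul_sub_le {α : Type*} {I : Set α} {u w : α → ℝ} {σ τ : ℝ}
    (hσ : 0 < σ) (hτ : 0 < τ)
    (hmono : ∀ x ∈ I, ∀ y ∈ I, u y ≤ u x → w y ≤ w x)
    (hle : ∀ x ∈ I, ∀ y ∈ I, u x - u y ≤ σ → w x - w y ≤ τ)
    (hge : ∀ x ∈ I, ∀ y ∈ I, σ ≤ u x - u y → τ ≤ w x - w y)
    (hsolv : ∀ x ∈ I, ∀ y ∈ I, u y + σ < u x → ∃ m ∈ I, u m = u y + σ)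
    {x y : α} (hx : x ∈ I) (hy : y ∈ I) :
    |(w x - w y) * σ - (u x - u y) * τ| ≤ σ * τ := by
  wlog hyx : u y ≤ u x generalizing x y
  · rw [← abs_neg]
    convert this hy hx (le_of_not_ge hyx) using 2
    ring
  obtain ⟨k, hk⟩ := exists_nat_ge ((u x - u y) / σ)
  rw [div_le_iff₀ hσ] at hk
  have small : ∀ y ∈ I, u y ≤ u x → u x - u y ≤ σ →
      |(w x - w y) * σ - (u x - u y) * τ| ≤ σ * τ := fun y hy hyx h => by
    have hw := hle x hx y hy h
    have hw₀ := hmono x hx y hy hyx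
    exact abs_sub_le_of_nonneg_of_le (by nlinarith) (by nlinarith) (by nlinarith) (by nlinarith)
  induction k generalizing y with
  | zero => exact small y hy hyx (by push_cast at hk; linarith)
  | succ k ih =>
    by_cases h : u x - u y ≤ σ
    · exact small y hy hyx h
    obtain ⟨m, hm, hum⟩ := hsolv x hx y hy (by linarith)
    have hwm : w m - w y = τ :=
      le_antisymm (hle m hm y hy (by linarith)) (hge m hm y hy (by linarith))
    calc |(w x - w y) * σ - (u x - u y) * τ|
        = |(w x - w m) * σ - (u x - u m) * τ| := by
          rw [show w y = w m - τ by linarith, hum]; ring_nf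
      _ ≤ σ * τ := ih hm (by linarith) (by push_cast at hk; linarith)

theorem mul_eq_mul_of_forall_abs_le {a b c d : ℝ}
    (h : ∀ ε > 0, ∃ σ > 0, ∃ τ < ε, |b * σ - a * τ| ≤ σ * τ ∧ |d * σ - c * τ| ≤ σ * τ) :
    a * d = c * b := by
  have hbound : ∀ ε > 0, |a * d - c * b| ≤ (|a| + |c|) * ε := fun ε hε => by
    obtain ⟨σ, hσ, τ, hτε, hb, hd⟩ := h ε hε
    have hστ : |a * d - c * b| * σ ≤ (|a| + |c|) * τ * σ :=
      calc |a * d - c * b| * σ = |a * (d * σ - c * τ) - c * (b * σ - a * τ)| := by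
            rw [← abs_of_pos hσ, ← abs_mul, abs_of_pos hσ]; ring_nf
        _ ≤ |a| * |d * σ - c * τ| + |c| * |b * σ - a * τ| := by
            rw [← abs_mul, ← abs_mul]; exact abs_sub _ _
        _ ≤ |a| * (σ * τ) + |c| * (σ * τ) := by gcongr
        _ = (|a| + |c|) * τ * σ := by ring
    calc |a * d - c * b| ≤ (|a| + |c|) * τ := le_of_mul_le_mul_right hστ hσ
      _ ≤ (|a| + |c|) * ε := by gcongr
  by_contra hne
  have hpos : 0 < |a * d - c * b| := abs_pos.2 (sub_ne_zero.2 hne)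
  have := hbound (|a * d - c * b| / (2 * (|a| + |c| + 1))) (by positivity)
  rw [mul_div_assoc', le_div_iff₀ (by positivity)] at this
  nlinarith [abs_nonneg a, abs_nonneg c]

theorem exists_pos_forall_eq_mul {α : Type*} {D : Set α} {u w : α → ℝ}
    (hsign : ∀ p ∈ D, (u p ≤ 0 ↔ w p ≤ 0) ∧ (0 ≤ u p ↔ 0 ≤ w p))
    (hcross : ∀ p ∈ D, ∀ q ∈ D, u p * w q = u q * w p) :
    ∃ c > 0, ∀ p ∈ D, u p = c * w p := by
  by_cases hzero : ∀ p ∈ D, w p = 0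
  · refine ⟨1, one_pos, fun p hp => ?_⟩
    have hsp := hsign p hp
    rw [hzero p hp] at hsp ⊢
    linarith [hsp.1.2 le_rfl, hsp.2.2 le_rfl]
  push Not at hzero
  obtain ⟨p₀, hp₀, hw₀⟩ := hzero
  refine ⟨u p₀ / w p₀, ?_, fun p hp => ?_⟩
  · have hs := hsign p₀ hp₀
    rcases hw₀.lt_or_gt with hneg | hpos
    · exact div_pos_of_neg_of_neg (lt_of_not_ge (mt hs.2.1 hneg.not_ge)) hneg
    · exact div_pos (lt_of_not_ge (mt hs.1.1 hpos.not_ge)) hpos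
  · rw [div_mul_eq_mul_div, eq_div_iff hw₀, hcross p₀ hp₀ p hp]

end RealLemmas

section Preference

variable {X₁ X₂ : Type*} {R : X₁ × X₂ → X₁ × X₂ → Prop}

theorem ge1_refl (h1 : A1 R) (a : X₁) : Ge1 R a a := fun p => (h1.1 (a, p) (a, p)).elim id id

theorem ge2_refl (h1 : A1 R) (p : X₂) : Ge2 R p p := fun a => (h1.1 (a, p) (a, p)).elim id id

theorem Ge1.trans {a b c : X₁} (hab : Ge1 R a b) (h1 : A1 R) (hbc : Ge1 R b c) : Ge1 R a c :=
  fun p => h1.2 _ _ _ (hab p) (hbc p)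

theorem Ge2.trans {p q s : X₂} (hpq : Ge2 R p q) (h1 : A1 R) (hqs : Ge2 R q s) : Ge2 R p s :=
  fun a => h1.2 _ _ _ (hpq a) (hqs a)

theorem ge1_of_not_ge1 (h1 : A1 R) (h2 : A2 R) {a b : X₁} (h : ¬ Ge1 R a b) : Ge1 R b a := by
  obtain ⟨p, hp⟩ := not_forall.1 h
  exact h2.1 b a p ⟨(h1.1 _ _).resolve_left hp, hp⟩

theorem ge2_total (h1 : A1 R) (h2 : A2 R) (p q : X₂) : Ge2 R p q ∨ Ge2 R q p := by
  refine or_iff_not_imp_left.2 fun h => ?_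
  obtain ⟨a, ha⟩ := not_forall.1 h
  exact h2.2 q p a ⟨(h1.1 _ _).resolve_left ha, ha⟩

theorem exists_ge2_between (h1 : A1 R) (h2 : A2 R) (h8 : A8 R) {a : X₁} {α β : X₂}
    {ξ : X₁ × X₂} (hβ : SP R (a, β) ξ) (hα : SP R ξ (a, α)) :
    ∃ m, IP R (a, m) ξ ∧ SP R (a, β) (a, m) ∧ SP R (a, m) (a, α) ∧
      Ge2 R β m ∧ Ge2 R m α := by
  obtain ⟨m, hm⟩ := h8.1 a β α ξ hβ.1 hα.1
  have hβm : SP R (a, β) (a, m) :=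
    ⟨h1.2 _ _ _ hβ.1 hm.2, fun h => hβ.2 (h1.2 _ _ _ hm.2 h)⟩
  have hmα : SP R (a, m) (a, α) :=
    ⟨h1.2 _ _ _ hm.1 hα.1, fun h => hα.2 (h1.2 _ _ _ h hm.1)⟩
  exact ⟨m, hm, hβm, hmα, h2.2 _ _ _ hβm, h2.2 _ _ _ hmα⟩

theorem AddRep.rel_iff {V₁ : X₁ → ℝ} {V₂ : X₂ → ℝ} {A : Set (X₁ × X₂)}
    (hV : AddRep R V₁ V₂ A) {e f : X₁} {x y : X₂} (hex : (e, x) ∈ A) (hfy : (f, y) ∈ A) :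
    R (e, x) (f, y) ↔ V₁ f + V₂ y ≤ V₁ e + V₂ x :=
  hV _ hex _ hfy

theorem AddRep.sp_iff {V₁ : X₁ → ℝ} {V₂ : X₂ → ℝ} {A : Set (X₁ × X₂)}
    (hV : AddRep R V₁ V₂ A) {e f : X₁} {x y : X₂} (hex : (e, x) ∈ A) (hfy : (f, y) ∈ A) :
    SP R (e, x) (f, y) ↔ V₁ f + V₂ y < V₁ e + V₂ x := by
  rw [SP, hV.rel_iff hex hfy, hV.rel_iff hfy hex, not_le]
  exact ⟨fun h => h.2, fun h => ⟨h.le, h⟩⟩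

theorem AddRep.ip_iff {V₁ : X₁ → ℝ} {V₂ : X₂ → ℝ} {A : Set (X₁ × X₂)}
    (hV : AddRep R V₁ V₂ A) {e f : X₁} {x y : X₂} (hex : (e, x) ∈ A) (hfy : (f, y) ∈ A) :
    IP R (e, x) (f, y) ↔ V₁ f + V₂ y = V₁ e + V₂ x := by
  rw [IP, hV.rel_iff hex hfy, hV.rel_iff hfy hex, le_antisymm_iff]

theorem SEz_subset_SEreg (h1 : A1 R) {z : X₁ × X₂} (hz : z ∈ Theta R \ SEext R) :
    SEz R z ⊆ SEreg R := by
  obtain ⟨hzΘ, hzext⟩ := hz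
  rcases hzΘ.1 with ⟨z', hmax, hmin, htc, hz'⟩ | ⟨hbd, -⟩
  · exact fun x hx => Or.inl ⟨z', hmax, hmin, htc, hx.1.trans h1 hz'.1, hz'.2.trans h1 hx.2⟩
  · exact absurd ⟨hzΘ, hbd.symm⟩ hzext

theorem NWz_subset_NWreg (h1 : A1 R) {ζ : X₁ × X₂} (hζ : ζ ∈ Theta R \ NWext R) :
    NWz R ζ ⊆ NWreg R := by
  obtain ⟨hζΘ, hζext⟩ := hζ
  rcases hζΘ.2 with ⟨z', hmin, hmax, htc, hz'⟩ | ⟨hbd, -⟩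
  · exact fun x hx => Or.inl ⟨z', hmin, hmax, htc, hx.1.trans h1 hz'.1, hz'.2.trans h1 hx.2⟩
  · exact absurd ⟨hζΘ, hbd⟩ hζext

theorem A4.cancel_SE_NW (h4 : A4 R) (hE : Ess2 R (SEreg R)) {a b c d : X₁} {p q r s : X₂}
    (hSE : In4 (SEreg R) (a, p) (b, q) (a, r) (b, s))
    (hNW : In4 (NWreg R) (c, p) (d, q) (c, r) (d, s)) :
    R (b, q) (a, p) → R (a, r) (b, s) → R (c, p) (d, q) → R (c, r) (d, s) :=
  h4 a b c d p q r s (Or.inr <| Or.inr <| Or.inr <| Or.inl ⟨hSE, hE, hNW⟩)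

theorem A4.cancel_NW_SE (h4 : A4 R) (hE : Ess2 R (NWreg R)) {a b c d : X₁} {p q r s : X₂}
    (hNW : In4 (NWreg R) (a, p) (b, q) (a, r) (b, s))
    (hSE : In4 (SEreg R) (c, p) (d, q) (c, r) (d, s)) :
    R (b, q) (a, p) → R (a, r) (b, s) → R (c, p) (d, q) → R (c, r) (d, s) :=
  h4 a b c d p q r s (Or.inr <| Or.inr <| Or.inl ⟨hNW, hE, hSE⟩)

theorem column_rel_iff (h1 : A1 R) (h4 : A4 R) (hE2s : Ess2 R (SEreg R))
    (hE2n : Ess2 R (NWreg R)) {a c : X₁} {x y : X₂}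
    (hax : (a, x) ∈ SEreg R) (hay : (a, y) ∈ SEreg R)
    (hcx : (c, x) ∈ NWreg R) (hcy : (c, y) ∈ NWreg R) :
    R (a, y) (a, x) ↔ R (c, y) (c, x) := by
  constructor
  · intro h
    exact (h1.1 _ _).elim id
      (h4.cancel_SE_NW hE2s ⟨hax, hay, hay, hax⟩ ⟨hcx, hcy, hcy, hcx⟩ h h)
  · intro h
    exact (h1.1 _ _).elim id
      (h4.cancel_NW_SE hE2n ⟨hcx, hcy, hcy, hcx⟩ ⟨hax, hay, hay, hax⟩ h h)

/-- If `(a, p) ∼ (c, p)`, the constant sequence `p, p, p, …` is an infinite bounded standard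
sequence on `X₂`. -/
theorem A9.not_IP_of_mem_SEz (h1 : A1 R) (h9 : A9 R) {z : X₁ × X₂} (hz : z ∈ SEreg R)
    {a c : X₁} {p : X₂} (ha : (a, p) ∈ SEz R z) (hc : (c, p) ∈ SEz R z)
    (hac : ¬ (Ge1 R a c ∧ Ge1 R c a)) : ¬ IP R (a, p) (c, p) := fun hIP =>
  Set.infinite_univ <| h9.2.2.2 z hz Set.univ (fun _ => p) a c
    ⟨fun _ _ _ _ _ _ _ => trivial, hac, fun _ _ _ => hIP⟩
    ⟨(a, p), (a, p), fun _ _ => ⟨ge1_refl h1 a p, ge1_refl h1 a p⟩⟩ fun _ _ => ⟨ha, hc⟩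

theorem A9.not_IP_of_mem_NWz (h1 : A1 R) (h9 : A9 R) {ζ : X₁ × X₂} (hζ : ζ ∈ NWreg R)
    {a c : X₁} {p : X₂} (ha : (a, p) ∈ NWz R ζ) (hc : (c, p) ∈ NWz R ζ)
    (hac : ¬ (Ge1 R a c ∧ Ge1 R c a)) : ¬ IP R (a, p) (c, p) := fun hIP =>
  Set.infinite_univ <| h9.2.2.1 ζ hζ Set.univ (fun _ => p) a c
    ⟨fun _ _ _ _ _ _ _ => trivial, hac, fun _ _ _ => hIP⟩
    ⟨(a, p), (a, p), fun _ _ => ⟨ge1_refl h1 a p, ge1_refl h1 a p⟩⟩ fun _ _ => ⟨ha, hc⟩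

theorem exists_V₁_gt_of_nonextreme (h1 : A1 R) (h2 : A2 R) (h9 : A9 R) {V₁ : X₁ → ℝ}
    {V₂ : X₂ → ℝ} {z : X₁ × X₂} (hz : z ∈ Theta R \ SEext R) (hV : AddRep R V₁ V₂ (SEz R z)) :
    ∃ e, Ge1 R e z.1 ∧ V₁ z.1 < V₁ e := by
  obtain ⟨c, hc⟩ := not_forall.1 fun hmax : Max1 R z.1 => hz.2 ⟨hz.1, Or.inr hmax⟩
  have hcz : Ge1 R c z.1 := ge1_of_not_ge1 h1 h2 hc
  have hzm : (z.1, z.2) ∈ SEz R z := ⟨ge1_refl h1 _, ge2_refl h1 _⟩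
  have hcm : (c, z.2) ∈ SEz R z := ⟨hcz, ge2_refl h1 _⟩
  refine ⟨c, hcz, lt_of_le_of_ne ?_ fun hV₁ => ?_⟩
  · simpa using (hV.rel_iff hcm hzm).1 (hcz z.2)
  · exact A9.not_IP_of_mem_SEz h1 h9 hz.1.1 hzm hcm (fun h => hc h.1)
      ((hV.ip_iff hzm hcm).2 (by rw [hV₁]))

theorem exists_V₁_lt_of_nonextreme (h1 : A1 R) (h2 : A2 R) (h9 : A9 R) {V₁ : X₁ → ℝ}
    {V₂ : X₂ → ℝ} {ζ : X₁ × X₂} (hζ : ζ ∈ Theta R \ NWext R) (hV : AddRep R V₁ V₂ (NWz R ζ)) :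
    ∃ e, Ge1 R ζ.1 e ∧ V₁ e < V₁ ζ.1 := by
  obtain ⟨c, hc⟩ := not_forall.1 fun hmin : Min1 R ζ.1 => hζ.2 ⟨hζ.1, Or.inl hmin⟩
  have hζc : Ge1 R ζ.1 c := ge1_of_not_ge1 h1 h2 hc
  have hζm : (ζ.1, ζ.2) ∈ NWz R ζ := ⟨ge2_refl h1 _, ge1_refl h1 _⟩
  have hcm : (c, ζ.2) ∈ NWz R ζ := ⟨ge2_refl h1 _, hζc⟩
  refine ⟨c, hζc, lt_of_le_of_ne ?_ fun hV₁ => ?_⟩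
  · simpa using (hV.rel_iff hζm hcm).1 (hζc ζ.2)
  · exact A9.not_IP_of_mem_NWz h1 h9 hζ.1.2 hζm hcm (fun h => hc h.2)
      ((hV.ip_iff hζm hcm).2 (by rw [hV₁]))

/-- Rows crossing both the SE cone at `z` and the NW cone at `ζ`. -/
def strip (R : X₁ × X₂ → X₁ × X₂ → Prop) (z ζ : X₁ × X₂) : Set X₂ :=
  {x | Ge2 R z.2 x ∧ Ge2 R x ζ.2}

section Strip

variable {V₁s V₁n : X₁ → ℝ} {V₂s V₂n : X₂ → ℝ} {z ζ : X₁ × X₂}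

theorem strip_le_iff (h1 : A1 R) (h4 : A4 R) (hE2s : Ess2 R (SEreg R))
    (hE2n : Ess2 R (NWreg R)) (hSE : SEz R z ⊆ SEreg R) (hNW : NWz R ζ ⊆ NWreg R)
    (hs : AddRep R V₁s V₂s (SEz R z)) (hn : AddRep R V₁n V₂n (NWz R ζ)) {x y : X₂}
    (hx : x ∈ strip R z ζ) (hy : y ∈ strip R z ζ) :
    V₂s x ≤ V₂s y ↔ V₂n x ≤ V₂n y := by
  have hzx : (z.1, x) ∈ SEz R z := ⟨ge1_refl h1 _, hx.1⟩
  have hzy : (z.1, y) ∈ SEz R z := ⟨ge1_refl h1 _, hy.1⟩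
  have hζx : (ζ.1, x) ∈ NWz R ζ := ⟨hx.2, ge1_refl h1 _⟩
  have hζy : (ζ.1, y) ∈ NWz R ζ := ⟨hy.2, ge1_refl h1 _⟩
  calc V₂s x ≤ V₂s y ↔ R (z.1, y) (z.1, x) := by rw [hs.rel_iff hzy hzx, add_le_add_iff_left]
    _ ↔ R (ζ.1, y) (ζ.1, x) :=
      column_rel_iff h1 h4 hE2s hE2n (hSE hzx) (hSE hzy) (hNW hζx) (hNW hζy)
    _ ↔ V₂n x ≤ V₂n y := by rw [hn.rel_iff hζy hζx, add_le_add_iff_left]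

theorem strip_exists_between (h1 : A1 R) (h2 : A2 R) (h8 : A8 R) (hdense : OrderDense R)
    (hs : AddRep R V₁s V₂s (SEz R z)) {x y : X₂} (hx : x ∈ strip R z ζ)
    (hy : y ∈ strip R z ζ) (hxy : V₂s x < V₂s y) :
    ∃ m ∈ strip R z ζ, V₂s x < V₂s m ∧ V₂s m < V₂s y := by
  have hzx : (z.1, x) ∈ SEz R z := ⟨ge1_refl h1 _, hx.1⟩
  have hzy : (z.1, y) ∈ SEz R z := ⟨ge1_refl h1 _, hy.1⟩
  obtain ⟨ξ, hyξ, hξx⟩ := hdense _ _ ((hs.sp_iff hzy hzx).2 (by linarith))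
  obtain ⟨m, -, hym, hmx, hym₂, hmx₂⟩ := exists_ge2_between h1 h2 h8 hyξ hξx
  have hzm : (z.1, m) ∈ SEz R z := ⟨ge1_refl h1 _, hy.1.trans h1 hym₂⟩
  refine ⟨m, ⟨hzm.2, hmx₂.trans h1 hx.2⟩, ?_, ?_⟩
  · simpa using (hs.sp_iff hzm hzx).1 hmx
  · simpa using (hs.sp_iff hzy hzm).1 hym

theorem strip_exists_add (h1 : A1 R) (h2 : A2 R) (h8 : A8 R) (hs : AddRep R V₁s V₂s (SEz R z))
    {e : X₁} (he : Ge1 R e z.1) (hpos : V₁s z.1 < V₁s e) {x y : X₂} (hx : x ∈ strip R z ζ)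
    (hy : y ∈ strip R z ζ) (hyx : V₂s y + (V₁s e - V₁s z.1) < V₂s x) :
    ∃ m ∈ strip R z ζ, V₂s m = V₂s y + (V₁s e - V₁s z.1) := by
  have hzx : (z.1, x) ∈ SEz R z := ⟨ge1_refl h1 _, hx.1⟩
  have hzy : (z.1, y) ∈ SEz R z := ⟨ge1_refl h1 _, hy.1⟩
  have hey : (e, y) ∈ SEz R z := ⟨he, hy.1⟩
  obtain ⟨m, hm, -, -, hxm, hmy⟩ := exists_ge2_between h1 h2 h8
    ((hs.sp_iff hzx hey).2 (by linarith)) ((hs.sp_iff hey hzy).2 (by linarith))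
  have hzm : (z.1, m) ∈ SEz R z := ⟨ge1_refl h1 _, hx.1.trans h1 hxm⟩
  refine ⟨m, ⟨hzm.2, hmy.trans h1 hy.2⟩, ?_⟩
  have := (hs.ip_iff hzm hey).1 hm
  linarith

theorem strip_exists_V₁s_eq (h1 : A1 R) (h2 : A2 R) (h8 : A8 R)
    (hs : AddRep R V₁s V₂s (SEz R z)) {e : X₁} (he : Ge1 R e z.1) {x y : X₂}
    (hx : x ∈ strip R z ζ) (hy : y ∈ strip R z ζ) (hyx : V₂s y < V₂s x)
    (hle : V₂s x - V₂s y ≤ V₁s e - V₁s z.1) :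
    ∃ b, Ge1 R b z.1 ∧ V₁s b = V₁s z.1 + (V₂s x - V₂s y) := by
  have hzx : (z.1, x) ∈ SEz R z := ⟨ge1_refl h1 _, hx.1⟩
  have hzy : (z.1, y) ∈ SEz R z := ⟨ge1_refl h1 _, hy.1⟩
  obtain ⟨b, hb⟩ := h8.2 y e z.1 (z.1, x) ((hs.rel_iff ⟨he, hy.1⟩ hzx).2 (by linarith))
    ((hs.rel_iff hzx hzy).2 (by linarith))
  have hxy : SP R (z.1, x) (z.1, y) := (hs.sp_iff hzx hzy).2 (by linarith)
  have hbz : Ge1 R b z.1 :=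
    h2.1 b z.1 y ⟨h1.2 _ _ _ hb.1 hxy.1, fun h => hxy.2 (h1.2 _ _ _ h hb.1)⟩
  refine ⟨b, hbz, ?_⟩
  have := (hs.ip_iff ⟨hbz, hy.1⟩ hzx).1 hb
  linarith

theorem strip_exists_V₁n_eq (h1 : A1 R) (h2 : A2 R) (h8 : A8 R)
    (hn : AddRep R V₁n V₂n (NWz R ζ)) {e : X₁} (he : Ge1 R ζ.1 e) {x y : X₂}
    (hx : x ∈ strip R z ζ) (hy : y ∈ strip R z ζ) (hyx : V₂n y < V₂n x)
    (hle : V₂n x - V₂n y ≤ V₁n ζ.1 - V₁n e) :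
    ∃ d, Ge1 R ζ.1 d ∧ V₁n d = V₁n ζ.1 - (V₂n x - V₂n y) := by
  have hζx : (ζ.1, x) ∈ NWz R ζ := ⟨hx.2, ge1_refl h1 _⟩
  have hζy : (ζ.1, y) ∈ NWz R ζ := ⟨hy.2, ge1_refl h1 _⟩
  have hxy : SP R (ζ.1, x) (ζ.1, y) := (hn.sp_iff hζx hζy).2 (by linarith)
  obtain ⟨d, hd⟩ := h8.2 x ζ.1 e (ζ.1, y) hxy.1 ((hn.rel_iff hζy ⟨hx.2, he⟩).2 (by linarith))
  have hζd : Ge1 R ζ.1 d :=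
    h2.1 ζ.1 d x ⟨h1.2 _ _ _ hxy.1 hd.2, fun h => hxy.2 (h1.2 _ _ _ hd.2 h)⟩
  refine ⟨d, hζd, ?_⟩
  have := (hn.ip_iff ⟨hx.2, hζd⟩ hζy).1 hd
  linarith

theorem strip_translate (h1 : A1 R) (h4 : A4 R) (hE2s : Ess2 R (SEreg R))
    (hSE : SEz R z ⊆ SEreg R) (hNW : NWz R ζ ⊆ NWreg R)
    (hs : AddRep R V₁s V₂s (SEz R z)) (hn : AddRep R V₁n V₂n (NWz R ζ))
    {ee dd : X₁} (hee : Ge1 R ee z.1) (hdd : Ge1 R ζ.1 dd) {x₀ y₀ t P : X₂}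
    (hx₀ : x₀ ∈ strip R z ζ) (hy₀ : y₀ ∈ strip R z ζ)
    (ht : t ∈ strip R z ζ) (hP : P ∈ strip R z ζ)
    (hσ : V₁s ee + V₂s y₀ = V₁s z.1 + V₂s x₀) (hτ : V₁n dd + V₂n x₀ = V₁n ζ.1 + V₂n y₀) :
    (V₂s P - V₂s t ≤ V₁s ee - V₁s z.1 → V₂n P - V₂n t ≤ V₁n ζ.1 - V₁n dd) ∧
      (V₁s ee - V₁s z.1 ≤ V₂s P - V₂s t → V₁n ζ.1 - V₁n dd ≤ V₂n P - V₂n t) := by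
  have se : ∀ {e x}, Ge1 R e z.1 → x ∈ strip R z ζ → (e, x) ∈ SEz R z :=
    fun he hx => ⟨he, hx.1⟩
  have nw : ∀ {d x}, Ge1 R ζ.1 d → x ∈ strip R z ζ → (d, x) ∈ NWz R ζ :=
    fun hd hx => ⟨hx.2, hd⟩
  have hz := ge1_refl h1 z.1
  have hζ := ge1_refl h1 ζ.1
  constructor
  · intro h
    have := (hn.rel_iff (nw hζ ht) (nw hdd hP)).1 <| h4.cancel_SE_NW hE2s
      ⟨hSE (se hee hy₀), hSE (se hz hx₀), hSE (se hee ht), hSE (se hz hP)⟩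
      ⟨hNW (nw hζ hy₀), hNW (nw hdd hx₀), hNW (nw hζ ht), hNW (nw hdd hP)⟩
      ((hs.rel_iff (se hz hx₀) (se hee hy₀)).2 hσ.le)
      ((hs.rel_iff (se hee ht) (se hz hP)).2 (by linarith))
      ((hn.rel_iff (nw hζ hy₀) (nw hdd hx₀)).2 hτ.le)
    linarith
  · intro h
    have := (hn.rel_iff (nw hdd hP) (nw hζ ht)).1 <| h4.cancel_SE_NW hE2s
      ⟨hSE (se hz hx₀), hSE (se hee hy₀), hSE (se hz hP), hSE (se hee ht)⟩
      ⟨hNW (nw hdd hx₀), hNW (nw hζ hy₀), hNW (nw hdd hP), hNW (nw hζ ht)⟩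
      ((hs.rel_iff (se hee hy₀) (se hz hx₀)).2 hσ.ge)
      ((hs.rel_iff (se hz hP) (se hee ht)).2 (by linarith))
      ((hn.rel_iff (nw hdd hx₀) (nw hζ hy₀)).2 hτ.ge)
    linarith

theorem strip_exists_estimate (h1 : A1 R) (h2 : A2 R) (h4 : A4 R) (h8 : A8 R) (h9 : A9 R)
    (hdense : OrderDense R) (hE2s : Ess2 R (SEreg R)) (hE2n : Ess2 R (NWreg R))
    (hz : z ∈ Theta R \ SEext R) (hζ : ζ ∈ Theta R \ NWext R)
    (hs : AddRep R V₁s V₂s (SEz R z)) (hn : AddRep R V₁n V₂n (NWz R ζ)) {a b : X₂}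
    (ha : a ∈ strip R z ζ) (hb : b ∈ strip R z ζ) (hab : V₂s a < V₂s b) {ε : ℝ} (hε : 0 < ε) :
    ∃ σ > 0, ∃ τ < ε, ∀ x ∈ strip R z ζ, ∀ y ∈ strip R z ζ,
      |(V₂n x - V₂n y) * σ - (V₂s x - V₂s y) * τ| ≤ σ * τ := by
  have hSE := SEz_subset_SEreg h1 hz
  have hNW := NWz_subset_NWreg h1 hζ
  have hord : ∀ x ∈ strip R z ζ, ∀ y ∈ strip R z ζ, V₂s x ≤ V₂s y ↔ V₂n x ≤ V₂n y :=
    fun x hx y hy => strip_le_iff h1 h4 hE2s hE2n hSE hNW hs hn hx hy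
  obtain ⟨e, he, hev⟩ := exists_V₁_gt_of_nonextreme h1 h2 h9 hz hs
  obtain ⟨e', he', hev'⟩ := exists_V₁_lt_of_nonextreme h1 h2 h9 hζ hn
  obtain ⟨x₀, hx₀, y₀, hy₀, hσ₀, hσ, hτ₀, hτ⟩ := exists_pair_sub_lt
    (fun x hx y hy h => lt_of_not_ge fun h' => h.not_ge ((hord y hy x hx).2 h'))
    (fun x hx y hy => strip_exists_between h1 h2 h8 hdense hs hx hy) ha hb hab
    (lt_min (lt_min (sub_pos.2 hev) (sub_pos.2 hev')) hε)
  obtain ⟨ee, hee, heev⟩ := strip_exists_V₁s_eq h1 h2 h8 hs he hx₀ hy₀ (by linarith)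
    (hσ.le.trans ((min_le_left _ _).trans (min_le_left _ _)))
  obtain ⟨dd, hdd, hddv⟩ := strip_exists_V₁n_eq h1 h2 h8 hn he' hx₀ hy₀ (by linarith)
    (hτ.le.trans ((min_le_left _ _).trans (min_le_right _ _)))
  have htrans := fun {t P : X₂} (ht : t ∈ strip R z ζ) (hP : P ∈ strip R z ζ) =>
    strip_translate h1 h4 hE2s hSE hNW hs hn hee hdd hx₀ hy₀ ht hP (by linarith) (by linarith)
  refine ⟨V₁s ee - V₁s z.1, by linarith, V₁n ζ.1 - V₁n dd,
    by linarith [min_le_right (min (V₁s e - V₁s z.1) (V₁n ζ.1 - V₁n e')) ε],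
    fun x hx y hy => abs_sub_mul_sub_le (by linarith) (by linarith)
      (fun x hx y hy h => (hord y hy x hx).1 h) (fun x hx y hy => (htrans hy hx).1)
      (fun x hx y hy => (htrans hy hx).2)
      (fun x hx y hy => strip_exists_add h1 h2 h8 hs hee (by linarith) hx hy) hx hy⟩

theorem strip_mul_eq_mul (h1 : A1 R) (h2 : A2 R) (h4 : A4 R) (h8 : A8 R) (h9 : A9 R)
    (hdense : OrderDense R) (hE2s : Ess2 R (SEreg R)) (hE2n : Ess2 R (NWreg R))
    (hz : z ∈ Theta R \ SEext R) (hζ : ζ ∈ Theta R \ NWext R)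
    (hs : AddRep R V₁s V₂s (SEz R z)) (hn : AddRep R V₁n V₂n (NWz R ζ)) {p q r : X₂}
    (hp : p ∈ strip R z ζ) (hq : q ∈ strip R z ζ) (hr : r ∈ strip R z ζ)
    (hrs : V₂s r = 0) (hrn : V₂n r = 0) :
    V₂s p * V₂n q = V₂s q * V₂n p := by
  have hord := fun {x y : X₂} (hx : x ∈ strip R z ζ) (hy : y ∈ strip R z ζ) =>
    strip_le_iff h1 h4 hE2s hE2n (SEz_subset_SEreg h1 hz) (NWz_subset_NWreg h1 hζ) hs hn hx hy
  rcases eq_or_ne (V₂s p) 0 with hp₀ | hp₀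
  · have hwp : V₂n p = 0 := by
      have := (hord hp hr).1 (by rw [hp₀, hrs])
      have := (hord hr hp).1 (by rw [hp₀, hrs])
      linarith
    rw [hp₀, hwp, zero_mul, mul_zero]
  obtain ⟨a, ha, b, hb, hab⟩ : ∃ a ∈ strip R z ζ, ∃ b ∈ strip R z ζ, V₂s a < V₂s b := by
    rcases hp₀.lt_or_gt with h | h
    · exact ⟨p, hp, r, hr, hrs ▸ h⟩
    · exact ⟨r, hr, p, hp, hrs ▸ h⟩
  refine mul_eq_mul_of_forall_abs_le fun ε hε => ?_
  obtain ⟨σ, hσ, τ, hτ, hest⟩ :=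
    strip_exists_estimate h1 h2 h4 h8 h9 hdense hE2s hE2n hz hζ hs hn ha hb hab hε
  refine ⟨σ, hσ, τ, hτ, ?_, ?_⟩
  · simpa [hrs, hrn] using hest p hp r hr
  · simpa [hrs, hrn] using hest q hq r hr

end Strip

end Preference

section Strips

variable {X₁ X₂ : Type*} {R : X₁ × X₂ → X₁ × X₂ → Prop}

theorem strip_mono (h1 : A1 R) {z z' ζ ζ' : X₁ × X₂} (hz : Ge2 R z'.2 z.2)
    (hζ : Ge2 R ζ.2 ζ'.2) : strip R z ζ ⊆ strip R z' ζ' :=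
  fun _ hx => ⟨hz.trans h1 hx.1, hx.2.trans h1 hζ⟩

theorem exists_strip_of_mem_D2 {x : X₂} (hx : x ∈ D2 R) :
    ∃ z ∈ Theta R \ SEext R, ∃ ζ ∈ Theta R \ NWext R, x ∈ strip R z ζ := by
  obtain ⟨⟨a, ha⟩, ⟨b, hb⟩⟩ := hx
  simp only [SEstar, NWstar, Set.mem_iUnion₂] at ha hb
  obtain ⟨z, hz, hxz⟩ := ha
  obtain ⟨ζ, hζ, hxζ⟩ := hb
  exact ⟨z, hz, ζ, hζ, hxz.2, hxζ.1⟩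

theorem exists_strip_of_subset_D2 (h1 : A1 R) (h2 : A2 R) {s : Finset X₂}
    (hs : ∀ x ∈ s, x ∈ D2 R) (hne : s.Nonempty) :
    ∃ z ∈ Theta R \ SEext R, ∃ ζ ∈ Theta R \ NWext R, ∀ x ∈ s, x ∈ strip R z ζ := by
  induction hne using Finset.Nonempty.cons_induction with
  | singleton x =>
    obtain ⟨z, hz, ζ, hζ, hx⟩ := exists_strip_of_mem_D2 (hs x (Finset.mem_singleton_self x))
    exact ⟨z, hz, ζ, hζ, fun y hy => Finset.mem_singleton.1 hy ▸ hx⟩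
  | cons x s hxs hne ih =>
    obtain ⟨z₁, hz₁, ζ₁, hζ₁, hs₁⟩ := ih fun y hy => hs y (Finset.mem_cons_of_mem hy)
    obtain ⟨z₂, hz₂, ζ₂, hζ₂, hx₂⟩ := exists_strip_of_mem_D2 (hs x (Finset.mem_cons_self x s))
    obtain ⟨z, hz, hz₁z, hz₂z⟩ :
        ∃ z ∈ Theta R \ SEext R, Ge2 R z.2 z₁.2 ∧ Ge2 R z.2 z₂.2 := by
      rcases ge2_total h1 h2 z₁.2 z₂.2 with h | h
      exacts [⟨z₁, hz₁, ge2_refl h1 _, h⟩, ⟨z₂, hz₂, h, ge2_refl h1 _⟩]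
    obtain ⟨ζ, hζ, hζ₁ζ, hζ₂ζ⟩ :
        ∃ ζ ∈ Theta R \ NWext R, Ge2 R ζ₁.2 ζ.2 ∧ Ge2 R ζ₂.2 ζ.2 := by
      rcases ge2_total h1 h2 ζ₁.2 ζ₂.2 with h | h
      exacts [⟨ζ₂, hζ₂, h, ge2_refl h1 _⟩, ⟨ζ₁, hζ₁, ge2_refl h1 _, h⟩]
    refine ⟨z, hz, ζ, hζ, ?_⟩
    simp only [Finset.mem_cons, forall_eq_or_imp]
    exact ⟨strip_mono h1 hz₂z hζ₂ζ hx₂, fun y hy => strip_mono h1 hz₁z hζ₁ζ (hs₁ y hy)⟩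

end Strips

theorem align_second_value_functions_general {X₁ X₂ : Type*}
    (R : X₁ × X₂ → X₁ × X₂ → Prop)
    (h1 : A1 R) (h2 : A2 R) (h4 : A4 R) (h8 : A8 R) (h9 : A9 R)
    (hdense : OrderDense R)
    (hE2s : Ess2 R (SEreg R)) (hE2n : Ess2 R (NWreg R))
    (V₁s : X₁ → ℝ) (V₂s : X₂ → ℝ) (V₁n : X₁ → ℝ) (V₂n : X₂ → ℝ)
    (hs : ∀ z ∈ Theta R \ SEext R, AddRep R V₁s V₂s (SEz R z))
    (hn : ∀ z ∈ Theta R \ NWext R, AddRep R V₁n V₂n (NWz R z))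
    (r : X₂) (hr : r ∈ D2 R) (hrs : V₂s r = 0) (hrn : V₂n r = 0) :
    ∃ lam : ℝ, 0 < lam ∧ ∀ p ∈ D2 R, V₂s p = lam * V₂n p := by
  refine exists_pos_forall_eq_mul (fun p hp => ?_) (fun p hp q hq => ?_)
  · obtain ⟨z, hz, ζ, hζ, hpr⟩ := exists_strip_of_subset_D2 h1 h2 (s := {p, r})
      (by simp [hp, hr]) (by simp)
    have hord := fun {x y : X₂} (hx : x ∈ strip R z ζ) (hy : y ∈ strip R z ζ) =>
      strip_le_iff h1 h4 hE2s hE2n (SEz_subset_SEreg h1 hz) (NWz_subset_NWreg h1 hζ)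
        (hs z hz) (hn ζ hζ) hx hy
    have hpr' := hord (hpr p (by simp)) (hpr r (by simp))
    have hrp' := hord (hpr r (by simp)) (hpr p (by simp))
    rw [hrs, hrn] at hpr' hrp'
    exact ⟨hpr', hrp'⟩
  · obtain ⟨z, hz, ζ, hζ, hpqr⟩ := exists_strip_of_subset_D2 h1 h2 (s := {p, q, r})
      (by simp [hp, hq, hr]) (by simp)
    exact strip_mul_eq_mul h1 h2 h4 h8 h9 hdense hE2s hE2n hz hζ (hs z hz) (hn ζ hζ)
      (hpqr p (by simp)) (hpqr q (by simp)) (hpqr r (by simp)) hrs hrn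

/-- Proportionality of the second-coordinate value functions of the SE and NW
representations. -/
theorem align_second_value_functions {X₁ X₂ : Type*} [Nonempty X₁] [Nonempty X₂]
    (R : X₁ × X₂ → X₁ × X₂ → Prop)
    (h1 : A1 R) (h2 : A2 R) (h3 : A3 R) (h4 : A4 R) (h8 : A8 R) (h9 : A9 R)
    (hdense : OrderDense R)
    (hE1s : Ess1 R (SEreg R)) (hE2s : Ess2 R (SEreg R))
    (hE1n : Ess1 R (NWreg R)) (hE2n : Ess2 R (NWreg R))
    (V₁s : X₁ → ℝ) (V₂s : X₂ → ℝ) (V₁n : X₁ → ℝ) (V₂n : X₂ → ℝ)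
    (hs : ∀ z ∈ Theta R \ SEext R, AddRep R V₁s V₂s (SEz R z))
    (hn : ∀ z ∈ Theta R \ NWext R, AddRep R V₁n V₂n (NWz R z))
    (heq : ∀ a ∈ D1 R, V₁s a = V₁n a)
    (hnonconst : ∃ a ∈ D1 R, ∃ b ∈ D1 R, V₁s a ≠ V₁s b)
    (r : X₂) (hr : r ∈ D2 R) (hrs : V₂s r = 0) (hrn : V₂n r = 0) :
    ∃ lam : ℝ, 0 < lam ∧ ∀ p ∈ D2 R, V₂s p = lam * V₂n p :=
  align_second_value_functions_general R h1 h2 h4 h8 h9 hdense hE2s hE2n V₁s V₂s V₁n V₂n hs hn r hr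
    hrs hrn
end

section
/- Suppose ≽ satisfies A1 (weak order), weak separability (A2), and A3, both coordinates are essential on SE, and V₁ : X₁ → ℝ, V₂ : X₂ → ℝ additively represent ≽ on SE(z) for every z ∈ Θ \ SE_ext. Let SE* = ⋃_{z ∈ Θ \ SE_ext} SE(z). If there exists a maximal element M₁ ∈ X₁, then V₁ is bounded above on {a ∈ X₁ : ∃p ∈ X₂, ap ∈ SE*}, i.e. there exists B ∈ ℝ with V₁(a) ≤ B for every such a; and if there exists a minimal element m₂ ∈ X₂, then V₂ is bounded below on {p ∈ X₂ : ∃a ∈ X₁, ap ∈ SE*}. -/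
open Set
open scoped Classical

/-! A maximal `M₁` (minimal `m₂`) can replace the first (second) coordinate of any point of a
south-east cone without leaving it, so on the cone through `ap` the additive representation
compares `ap` with `M₁p` (with `am₂`); hence `V₁ M₁` and `V₂ m₂` are the bounds. -/

section ValueFunctionBounds

variable {X₁ X₂ : Type*} {R : X₁ × X₂ → X₁ × X₂ → Prop}

theorem mem_SEz_of_max1 {M a : X₁} {p : X₂} {z : X₁ × X₂} (hM : Max1 R M)
    (hap : (a, p) ∈ SEz R z) : (M, p) ∈ SEz R z :=
  ⟨hM z.1, hap.2⟩

theorem mem_SEz_of_min2 {a : X₁} {m p : X₂} {z : X₁ × X₂} (hm : Min2 R m)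
    (hap : (a, p) ∈ SEz R z) : (a, m) ∈ SEz R z :=
  ⟨hap.1, hm z.2⟩

theorem AddRep.fst_le_of_max1 {V₁ : X₁ → ℝ} {V₂ : X₂ → ℝ} {z : X₁ × X₂}
    (hrep : AddRep R V₁ V₂ (SEz R z)) {M a : X₁} {p : X₂} (hM : Max1 R M)
    (hap : (a, p) ∈ SEz R z) : V₁ a ≤ V₁ M := by
  simpa using (hrep _ (mem_SEz_of_max1 hM hap) _ hap).mp (hM a p)

theorem AddRep.le_snd_of_min2 {V₁ : X₁ → ℝ} {V₂ : X₂ → ℝ} {z : X₁ × X₂}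
    (hrep : AddRep R V₁ V₂ (SEz R z)) {a : X₁} {m p : X₂} (hm : Min2 R m)
    (hap : (a, p) ∈ SEz R z) : V₂ m ≤ V₂ p := by
  simpa using (hrep _ hap _ (mem_SEz_of_min2 hm hap)).mp (hm p a)

theorem mem_SEstar_iff {x : X₁ × X₂} :
    x ∈ SEstar R ↔ ∃ z ∈ Theta R \ SEext R, x ∈ SEz R z := by
  simp only [SEstar, Set.mem_iUnion, exists_prop]

end ValueFunctionBounds

theorem value_functions_bounded_general {X₁ X₂ : Type*}
    (R : X₁ × X₂ → X₁ × X₂ → Prop)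
    (V₁ : X₁ → ℝ) (V₂ : X₂ → ℝ)
    (hrep : ∀ z ∈ Theta R \ SEext R, AddRep R V₁ V₂ (SEz R z)) :
    ((∃ M₁ : X₁, Max1 R M₁) →
      ∃ B : ℝ, ∀ a : X₁, (∃ p : X₂, (a,p) ∈ SEstar R) → V₁ a ≤ B) ∧
    ((∃ m₂ : X₂, Min2 R m₂) →
      ∃ B : ℝ, ∀ p : X₂, (∃ a : X₁, (a,p) ∈ SEstar R) → B ≤ V₂ p) := by
  constructor
  · rintro ⟨M₁, hM⟩
    refine ⟨V₁ M₁, fun a ⟨p, hap⟩ => ?_⟩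
    obtain ⟨z, hz, hap⟩ := mem_SEstar_iff.mp hap
    exact (hrep z hz).fst_le_of_max1 hM hap
  · rintro ⟨m₂, hm⟩
    refine ⟨V₂ m₂, fun p ⟨a, hap⟩ => ?_⟩
    obtain ⟨z, hz, hap⟩ := mem_SEstar_iff.mp hap
    exact (hrep z hz).le_snd_of_min2 hm hap

/-- Boundedness of the value functions in the presence of maximal/minimal elements. -/
theorem value_functions_bounded {X₁ X₂ : Type*} [Nonempty X₁] [Nonempty X₂]
    (R : X₁ × X₂ → X₁ × X₂ → Prop)
    (h1 : A1 R) (h2 : A2 R) (h3 : A3 R)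
    (hE1 : Ess1 R (SEreg R)) (hE2 : Ess2 R (SEreg R))
    (V₁ : X₁ → ℝ) (V₂ : X₂ → ℝ)
    (hrep : ∀ z ∈ Theta R \ SEext R, AddRep R V₁ V₂ (SEz R z)) :
    ((∃ M₁ : X₁, Max1 R M₁) →
      ∃ B : ℝ, ∀ a : X₁, (∃ p : X₂, (a,p) ∈ SEstar R) → V₁ a ≤ B) ∧
    ((∃ m₂ : X₂, Min2 R m₂) →
      ∃ B : ℝ, ∀ p : X₂, (∃ a : X₁, (a,p) ∈ SEstar R) → B ≤ V₂ p) :=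
  value_functions_bounded_general R V₁ V₂ hrep
end

section
/- (Necessity of axiom A4.) Let ν be a capacity on {1,2} with ν({2}) < 1, let f₁ : X₁ → ℝ and f₂ : X₂ → ℝ, and let ≽ be the relation on X = X₁ × X₂ represented by ν together with (f₁,f₂). Let a,b,c,d ∈ X₁ and p,q,r,s ∈ X₂ be such that f₂(p) ≥ f₁(a), f₂(q) ≥ f₁(b), f₂(p) ≥ f₁(c), f₂(q) ≥ f₁(d), and f₁(a) ≥ f₂(r), f₁(b) ≥ f₂(s), f₁(c) ≥ f₂(r), f₁(d) ≥ f₂(s). If bq ≽ ap, cp ≽ dq and ar ≽ bs, then cr ≽ ds. -/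
open Set
open scoped Classical

/-!
On each of the two regions `f₁ ≤ f₂` and `f₂ ≤ f₁` the two-point Choquet integral is a weighted
sum, so `R` is additively represented there, with `f₁` weighted by `1 - ν {2}` and by `ν {1}`
respectively. The two comparisons in the first region cancel the second coordinate and leave
the trade-off `f₁ a + f₁ d ≤ f₁ b + f₁ c`; this needs `1 - ν {2} > 0`. Since `ν {1} ≥ 0`, the
trade-off carries over to the second region, where together with `ar ≽ bs` it gives `cr ≽ ds`.
-/

theorem Capacity.nonneg (c : Capacity) (A : Set (Fin 2)) : 0 ≤ c.ν A := by
  simpa only [c.empty'] using c.mono' ∅ A (empty_subset A)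

theorem Choq_eq_of_le (c : Capacity) {t₁ t₂ : ℝ} (h : t₁ ≤ t₂) :
    Choq c t₁ t₂ = (1 - c.ν {1}) * t₁ + c.ν {1} * t₂ := by
  unfold Choq
  split_ifs with h'
  · obtain rfl : t₁ = t₂ := le_antisymm h h'
    ring
  · rfl

theorem Choq_eq_of_ge (c : Capacity) {t₁ t₂ : ℝ} (h : t₂ ≤ t₁) :
    Choq c t₁ t₂ = c.ν {0} * t₁ + (1 - c.ν {0}) * t₂ :=
  if_pos h

section ChoquetRegions

variable {X₁ X₂ : Type*} {c : Capacity} {f₁ : X₁ → ℝ} {f₂ : X₂ → ℝ}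
  {R : X₁ × X₂ → X₁ × X₂ → Prop}

theorem Represents.addRep_of_le (hrep : Represents c f₁ f₂ R) :
    AddRep R (fun a => (1 - c.ν {1}) * f₁ a) (fun p => c.ν {1} * f₂ p)
      {x | f₁ x.1 ≤ f₂ x.2} := by
  intro x hx y hy
  rw [hrep, Choq_eq_of_le c hx, Choq_eq_of_le c hy]

theorem Represents.addRep_of_ge (hrep : Represents c f₁ f₂ R) :
    AddRep R (fun a => c.ν {0} * f₁ a) (fun p => (1 - c.ν {0}) * f₂ p)
      {x | f₂ x.2 ≤ f₁ x.1} := by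
  intro x hx y hy
  rw [hrep, Choq_eq_of_ge c hx, Choq_eq_of_ge c hy]

end ChoquetRegions

section AdditiveTradeoff

variable {X₁ X₂ : Type*} {R : X₁ × X₂ → X₁ × X₂ → Prop} {g : X₁ → ℝ} {V₂ : X₂ → ℝ}
  {A : Set (X₁ × X₂)} {w : ℝ} {a b c d : X₁}

theorem AddRep.add_le_add_of_rel {p q : X₂} (hR : AddRep R (fun x => w * g x) V₂ A)
    (hw : 0 < w) (hap : (a, p) ∈ A) (hbq : (b, q) ∈ A) (hcp : (c, p) ∈ A) (hdq : (d, q) ∈ A)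
    (H₁ : R (b, q) (a, p)) (H₂ : R (c, p) (d, q)) :
    g a + g d ≤ g b + g c := by
  have h₁ := (hR _ hbq _ hap).1 H₁
  have h₂ := (hR _ hcp _ hdq).1 H₂
  have h : w * (g a + g d) ≤ w * (g b + g c) := by linarith
  exact le_of_mul_le_mul_left h hw

theorem AddRep.rel_of_add_le_add {r s : X₂} (hR : AddRep R (fun x => w * g x) V₂ A)
    (hw : 0 ≤ w) (har : (a, r) ∈ A) (hbs : (b, s) ∈ A) (hcr : (c, r) ∈ A) (hds : (d, s) ∈ A)
    (hg : g a + g d ≤ g b + g c) (H : R (a, r) (b, s)) :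
    R (c, r) (d, s) := by
  have h := (hR _ har _ hbs).1 H
  refine (hR _ hcr _ hds).2 ?_
  linarith [mul_le_mul_of_nonneg_left hg hw]

end AdditiveTradeoff

theorem A4_necessary_general {X₁ X₂ : Type*}
    (m : Capacity) (hm : m.ν {1} < 1)
    (f₁ : X₁ → ℝ) (f₂ : X₂ → ℝ)
    (R : X₁ × X₂ → X₁ × X₂ → Prop) (hrep : Represents m f₁ f₂ R)
    (a b c d : X₁) (p q r s : X₂)
    (hap : f₁ a ≤ f₂ p) (hbq : f₁ b ≤ f₂ q) (hcp : f₁ c ≤ f₂ p) (hdq : f₁ d ≤ f₂ q)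
    (har : f₂ r ≤ f₁ a) (hbs : f₂ s ≤ f₁ b) (hcr : f₂ r ≤ f₁ c) (hds : f₂ s ≤ f₁ d)
    (H1 : R (b,q) (a,p)) (H2 : R (c,p) (d,q)) (H3 : R (a,r) (b,s)) :
    R (c,r) (d,s) := by
  have htradeoff : f₁ a + f₁ d ≤ f₁ b + f₁ c :=
    hrep.addRep_of_le.add_le_add_of_rel (sub_pos.2 hm) hap hbq hcp hdq H1 H2
  exact hrep.addRep_of_ge.rel_of_add_le_add (m.nonneg {0}) har hbs hcr hds htradeoff H3

/-- Necessity of axiom A4 for the Choquet representation. -/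
theorem A4_necessary {X₁ X₂ : Type*} [Nonempty X₁] [Nonempty X₂]
    (m : Capacity) (hm : m.ν {1} < 1)
    (f₁ : X₁ → ℝ) (f₂ : X₂ → ℝ)
    (R : X₁ × X₂ → X₁ × X₂ → Prop) (hrep : Represents m f₁ f₂ R)
    (a b c d : X₁) (p q r s : X₂)
    (hap : f₁ a ≤ f₂ p) (hbq : f₁ b ≤ f₂ q) (hcp : f₁ c ≤ f₂ p) (hdq : f₁ d ≤ f₂ q)
    (har : f₂ r ≤ f₁ a) (hbs : f₂ s ≤ f₁ b) (hcr : f₂ r ≤ f₁ c) (hds : f₂ s ≤ f₁ d)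
    (H1 : R (b,q) (a,p)) (H2 : R (c,p) (d,q)) (H3 : R (a,r) (b,s)) :
    R (c,r) (d,s) :=
  A4_necessary_general m hm f₁ f₂ R hrep a b c d p q r s hap hbq hcp hdq har hbs hcr hds H1 H2 H3
end
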